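/- arXiv:1205.1022 — 3 statements merged into one kernel-verified Lean document; each statement's English description precedes it below -/
import Mathlib

section
/- Let V, V' be normed spaces and T : V → V' a bounded linear map. For α represented by a set A ⊆ V of elements, define for t > 0, N_t(α) = inf{‖u‖ : u ∈ A, ‖T u‖ ≤ t} (with inf ∅ = +∞) and N_0(α) = sup_{t>0} N_t(α); define q_θ(α) = inf{‖u‖ + θ‖T u‖ : u ∈ A} and q_∞(α) = sup_{θ≥0} q_θ(α). Then q_∞(α) = N_0(α). -/
open scoped ENNReal NNReal

/-- Abstract form of Lemma 5.1 (equality of Gromov's seminorm `‖·‖₁(∞)` and Thurston's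
seminorm `‖·‖₍₀₎`): with `q_θ = inf {‖u‖ + θ‖Tu‖ : u ∈ A}` and
`N_t = inf {‖u‖ : u ∈ A, ‖Tu‖ ≤ t}` (with `inf ∅ = ∞`), one has
`sup_θ q_θ = sup_{t>0} N_t`. -/
theorem gromov_infty_eq_thurston_zero {V V' : Type*}
    [NormedAddCommGroup V] [NormedSpace ℝ V] [NormedAddCommGroup V'] [NormedSpace ℝ V']
    (T : V →L[ℝ] V') (A : Set V) (hA : A.Nonempty) (q : ℝ≥0 → ℝ≥0∞) (N : ℝ → ℝ≥0∞)
    (hq : ∀ θ : ℝ≥0, q θ = ⨅ (u : V) (_ : u ∈ A), ENNReal.ofReal (‖u‖ + (θ : ℝ) * ‖T u‖))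
    (hN : ∀ t : ℝ, N t = ⨅ (u : V) (_ : u ∈ A ∧ ‖T u‖ ≤ t), ENNReal.ofReal ‖u‖) :
    (⨆ θ : ℝ≥0, q θ) = ⨆ (t : ℝ) (_ : 0 < t), N t := by
  set S : ℝ≥0∞ := ⨆ θ : ℝ≥0, q θ with hS
  set L : ℝ≥0∞ := ⨆ (t : ℝ) (_ : 0 < t), N t with hL
  apply le_antisymm
  · -- each q θ ≤ L
    refine iSup_le fun θ => ?_
    refine ENNReal.le_of_forall_pos_le_add fun ε hε hLtop => ?_
    -- choose t small
    set t : ℝ := ((ε : ℝ) / 2) / ((θ : ℝ) + 1) with ht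
    have hθ1 : (0:ℝ) < (θ : ℝ) + 1 := by positivity
    have hε' : (0:ℝ) < (ε : ℝ) := hε
    have htpos : 0 < t := by positivity
    have hNL : N t ≤ L := le_iSup₂ (f := fun t _ => N t) t htpos
    have hNlt : N t < N t + ENNReal.ofReal ((ε : ℝ) / 2) := by
      refine ENNReal.lt_add_right (lt_of_le_of_lt hNL hLtop).ne ?_
      simp [ENNReal.ofReal_pos, hε']
    rw [hN t] at hNlt
    rw [iInf_lt_iff] at hNlt
    obtain ⟨u, hu⟩ := hNlt
    rw [iInf_lt_iff] at hu
    obtain ⟨⟨huA, huT⟩, hu⟩ := hu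
    have hqle : q θ ≤ ENNReal.ofReal (‖u‖ + (θ : ℝ) * ‖T u‖) := by
      rw [hq θ]; exact iInf₂_le u huA
    have h2 : ENNReal.ofReal (‖u‖ + (θ : ℝ) * ‖T u‖) ≤
        ENNReal.ofReal ‖u‖ + ENNReal.ofReal ((θ : ℝ) * ‖T u‖) :=
      ENNReal.ofReal_add_le
    have hθt : (θ : ℝ) * ‖T u‖ ≤ (ε : ℝ) / 2 := by
      calc (θ : ℝ) * ‖T u‖ ≤ (θ : ℝ) * t :=
            mul_le_mul_of_nonneg_left huT θ.coe_nonneg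
        _ ≤ (((θ : ℝ) + 1)) * t := by nlinarith
        _ = (ε : ℝ) / 2 := by rw [ht]; field_simp
    calc q θ ≤ ENNReal.ofReal ‖u‖ + ENNReal.ofReal ((θ : ℝ) * ‖T u‖) := hqle.trans h2
      _ ≤ (N t + ENNReal.ofReal ((ε : ℝ) / 2)) + ENNReal.ofReal ((ε : ℝ) / 2) := by
          exact add_le_add (hu.le.trans (by rw [hN t])) (ENNReal.ofReal_le_ofReal hθt)
      _ ≤ L + ((ε : ℝ≥0∞) / 2 + (ε : ℝ≥0∞) / 2) := by
          rw [add_assoc]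
          have hhalf : ENNReal.ofReal ((ε : ℝ) / 2) = (ε : ℝ≥0∞) / 2 := by
            rw [ENNReal.ofReal_div_of_pos (by norm_num), ENNReal.ofReal_coe_nnreal]
            norm_num
          rw [hhalf]
          gcongr
      _ = L + ε := by rw [ENNReal.add_halves]
  · -- each N t ≤ S for t > 0
    refine iSup₂_le fun t htpos => ?_
    refine ENNReal.le_of_forall_pos_le_add fun ε hε hStop => ?_
    have hSε : S + (ε : ℝ≥0∞) ≠ ∞ := by
      exact ENNReal.add_ne_top.mpr ⟨hStop.ne, ENNReal.coe_ne_top⟩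
    have hSεpos : 0 < (S + ε).toReal :=
      ENNReal.toReal_pos (by simp [pos_iff_ne_zero.mp, hε.ne']) hSε
    set θ : ℝ≥0 := ((S + ε).toReal / t).toNNReal with hθ
    have hθval : (θ : ℝ) = (S + ε).toReal / t :=
      Real.coe_toNNReal _ (by positivity)
    have hqlt : q θ < S + ε := by
      refine lt_of_le_of_lt (le_iSup q θ) ?_
      exact ENNReal.lt_add_right hStop.ne (by simpa using hε.ne')
    rw [hq θ, iInf_lt_iff] at hqlt
    obtain ⟨u, hqlt⟩ := hqlt
    rw [iInf_lt_iff] at hqlt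
    obtain ⟨huA, hu⟩ := hqlt
    have hunorm : ‖u‖ + (θ : ℝ) * ‖T u‖ < (S + ε).toReal :=
      (ENNReal.ofReal_lt_iff_lt_toReal (by positivity) hSε).mp hu
    have hTu : ‖T u‖ ≤ t := by
      by_contra hc
      push_neg at hc
      have : (θ : ℝ) * t < (θ : ℝ) * ‖T u‖ := by
        apply mul_lt_mul_of_pos_left hc
        rw [hθval]; positivity
      have hθt : (θ : ℝ) * t = (S + ε).toReal := by
        rw [hθval]; field_simp
      nlinarith [norm_nonneg u]
    have : N t ≤ ENNReal.ofReal ‖u‖ := by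
      rw [hN t]; exact iInf₂_le u ⟨huA, hTu⟩
    refine this.trans ?_
    have huθ : (0:ℝ) ≤ (θ : ℝ) * ‖T u‖ := mul_nonneg θ.2 (norm_nonneg (T u))
    have : ‖u‖ ≤ (S + ε).toReal := by nlinarith
    calc ENNReal.ofReal ‖u‖ ≤ ENNReal.ofReal ((S + ε).toReal) :=
          ENNReal.ofReal_le_ofReal this
      _ = S + ε := ENNReal.ofReal_toReal hSε
end

section
/- Let G be a group acting on a set S, and suppose the stabilizer of every point of S is an amenable subgroup of G. Then there exists a G-equivariant linear map μ⁰ : ℓ∞(G) → ℓ∞(S) with operator norm at most 1 sending the constant function 1 on G to the constant function 1 on S. -/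
/-!
Pick a point `y` in each orbit, an invariant mean `m_y` on the stabilizer `H_y`, and for each
`s` a `t` with `t • y = s`; set `μ f s = m_y (k ↦ f (t k))`. Invariance of `m_y` under `H_y`
makes this independent of the choice of `t` (any other is `t h` with `h ∈ H_y`), which is exactly
what equivariance needs, and a positive normalized functional has norm at most `1`.
-/

open scoped ENNReal

/-- The constant function as an element of `ℓ∞(X)`. -/
noncomputable def lpConst (X : Type*) (c : ℝ) : lp (fun _ : X => ℝ) ∞ :=
  ⟨fun _ => c, memℓp_infty ⟨|c|, by rintro _ ⟨x, rfl⟩; simp [Real.norm_eq_abs]⟩⟩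

/-- The left translation action on `ℓ∞` of a `G`-set: `(g • f)(s) = f(g⁻¹ • s)`. -/
noncomputable def lpTranslate {G : Type*} [Group G] {α : Type*} [MulAction G α]
    (g : G) (f : lp (fun _ : α => ℝ) ∞) : lp (fun _ : α => ℝ) ∞ :=
  ⟨fun s => f (g⁻¹ • s), by
    refine memℓp_infty ?_
    obtain ⟨C, hC⟩ := (memℓp_infty_iff.mp (lp.memℓp f))
    exact ⟨C, by rintro _ ⟨s, rfl⟩; exact hC ⟨g⁻¹ • s, rfl⟩⟩⟩

/-- A left-invariant mean on `ℓ∞(G)`: a linear functional sending `1` to `1`, nonnegative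
on nonnegative functions, and invariant under left translation. -/
def IsInvariantMean (G : Type*) [Group G]
    (m : lp (fun _ : G => ℝ) ∞ →ₗ[ℝ] ℝ) : Prop :=
  m (lpConst G 1) = 1 ∧ (∀ f, (∀ x, 0 ≤ f x) → 0 ≤ m f) ∧
    ∀ (g : G) (f), m (lpTranslate g f) = m f

noncomputable def lpComap {α β : Type*} (φ : α → β) :
    lp (fun _ : β => ℝ) ∞ →ₗ[ℝ] lp (fun _ : α => ℝ) ∞ where
  toFun f := ⟨fun a => f (φ a), memℓp_infty ⟨‖f‖, by
    rintro _ ⟨a, rfl⟩; exact lp.norm_apply_le_norm ENNReal.top_ne_zero f (φ a)⟩⟩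
  map_add' _ _ := rfl
  map_smul' _ _ := rfl

lemma norm_lpComap_le {α β : Type*} (φ : α → β) (f : lp (fun _ : β => ℝ) ∞) :
    ‖lpComap φ f‖ ≤ ‖f‖ :=
  lp.norm_le_of_forall_le (norm_nonneg f) fun a =>
    lp.norm_apply_le_norm ENNReal.top_ne_zero f (φ a)

lemma abs_apply_le_norm_of_pos_of_map_one {X : Type*} {m : lp (fun _ : X => ℝ) ∞ →ₗ[ℝ] ℝ}
    (h1 : m (lpConst X 1) = 1) (hpos : ∀ f, (∀ x, 0 ≤ f x) → 0 ≤ m f)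
    (f : lp (fun _ : X => ℝ) ∞) : |m f| ≤ ‖f‖ := by
  have hf : ∀ x, |f x| ≤ ‖f‖ := fun x => lp.norm_apply_le_norm ENNReal.top_ne_zero f x
  have hc : m (‖f‖ • lpConst X 1) = ‖f‖ := by rw [map_smul, h1, smul_eq_mul, mul_one]
  have hlow := hpos (‖f‖ • lpConst X 1 + f) fun x => by
    change 0 ≤ ‖f‖ * 1 + f x
    linarith [neg_abs_le (f x), hf x]
  have hupp := hpos (‖f‖ • lpConst X 1 - f) fun x => by
    change 0 ≤ ‖f‖ * 1 - f x
    linarith [le_abs_self (f x), hf x]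
  rw [map_add, hc] at hlow
  rw [map_sub, hc] at hupp
  exact abs_le.mpr ⟨by linarith, by linarith⟩

noncomputable def lpInftyOfBoundedFamily {E S : Type*} [SeminormedAddCommGroup E]
    [NormedSpace ℝ E] (φ : S → E →ₗ[ℝ] ℝ) (hφ : ∀ s x, |φ s x| ≤ ‖x‖) :
    E →L[ℝ] lp (fun _ : S => ℝ) ∞ :=
  LinearMap.mkContinuous
    { toFun x := ⟨fun s => φ s x, memℓp_infty ⟨‖x‖, by rintro _ ⟨s, rfl⟩; exact hφ s x⟩⟩
      map_add' x x' := by ext s; exact map_add (φ s) x x'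
      map_smul' c x := by ext s; exact map_smul (φ s) c x }
    1 fun x => by
      rw [one_mul]
      exact lp.norm_le_of_forall_le (norm_nonneg x) fun s => hφ s x

lemma norm_lpInftyOfBoundedFamily_le {E S : Type*} [SeminormedAddCommGroup E]
    [NormedSpace ℝ E] (φ : S → E →ₗ[ℝ] ℝ) (hφ : ∀ s x, |φ s x| ≤ ‖x‖) :
    ‖lpInftyOfBoundedFamily φ hφ‖ ≤ 1 :=
  LinearMap.mkContinuous_norm_le _ zero_le_one _

section CosetMean

variable {G : Type*} [Group G] {H : Subgroup G}

noncomputable def cosetMean (m : lp (fun _ : H => ℝ) ∞ →ₗ[ℝ] ℝ) (a : G) :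
    lp (fun _ : G => ℝ) ∞ →ₗ[ℝ] ℝ :=
  m ∘ₗ lpComap fun k : H => a * k

lemma cosetMean_lpTranslate (m : lp (fun _ : H => ℝ) ∞ →ₗ[ℝ] ℝ) (a g : G)
    (f : lp (fun _ : G => ℝ) ∞) :
    cosetMean m a (lpTranslate g f) = cosetMean m (g⁻¹ * a) f := by
  simp only [cosetMean, LinearMap.comp_apply]
  congr 1
  ext k
  exact congrArg f (mul_assoc _ _ _).symm

lemma cosetMean_mul_right {m : lp (fun _ : H => ℝ) ∞ →ₗ[ℝ] ℝ}
    (hm : ∀ (h : H) (f), m (lpTranslate h f) = m f) (a : G) (h : H) :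
    cosetMean m (a * h) = cosetMean m a := by
  ext f
  have : lpComap (fun k : H => a * h * k) f =
      lpTranslate h⁻¹ (lpComap (fun k : H => a * k) f) := by
    ext k
    exact congrArg f (by simp [mul_assoc])
  simp only [cosetMean, LinearMap.comp_apply, this, hm]

lemma cosetMean_eq_of_smul_eq {S : Type*} [MulAction G S] {y : S}
    {m : lp (fun _ : MulAction.stabilizer G y => ℝ) ∞ →ₗ[ℝ] ℝ}
    (hm : ∀ (h : MulAction.stabilizer G y) (f), m (lpTranslate h f) = m f) {a c : G}
    (hac : a • y = c • y) : cosetMean m a = cosetMean m c := by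
  have hmem : c⁻¹ * a ∈ MulAction.stabilizer G y := by
    rw [MulAction.mem_stabilizer_iff, mul_smul, hac, inv_smul_smul]
  simpa using cosetMean_mul_right hm c ⟨c⁻¹ * a, hmem⟩

end CosetMean

lemma MulAction.exists_orbit_section (G S : Type*) [Group G] [MulAction G S] :
    ∃ (y : S → S) (t : S → G), (∀ s, t s • y s = s) ∧ ∀ (g : G) s, y (g • s) = y s := by
  let y s := (⟦s⟧ : Quotient (orbitRel G S)).out
  have hy : ∀ s, s ∈ orbit G (y s) := fun s =>
    mem_orbit_symm.mp (orbitRel_apply.mp (Quotient.mk_out s))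
  refine ⟨y, fun s => (hy s).choose, fun s => (hy s).choose_spec, fun g s => ?_⟩
  exact congrArg Quotient.out (Quotient.sound (orbitRel_apply.mpr (mem_orbit s g)))

/-- Base case `n = 0` of Proposition 2.1: if a group `G` acts on a set `S` with amenable
point stabilizers (each stabilizer carries a left invariant mean on its `ℓ∞`), then there
is a `G`-equivariant linear map `μ⁰ : ℓ∞(G) → ℓ∞(S)` of operator norm at most `1` sending
the constant function `1` to the constant function `1`. -/
theorem exists_equivariant_norm_one_map_of_amenable_stabilizers
    {G S : Type*} [Group G] [MulAction G S]
    (h : ∀ s : S, ∃ m : lp (fun _ : ↥(MulAction.stabilizer G s) => ℝ) ∞ →ₗ[ℝ] ℝ,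
      IsInvariantMean (MulAction.stabilizer G s) m) :
    ∃ μ : lp (fun _ : G => ℝ) ∞ →L[ℝ] lp (fun _ : S => ℝ) ∞,
      ‖μ‖ ≤ 1 ∧ μ (lpConst G 1) = lpConst S 1 ∧
      ∀ (g : G) (f), μ (lpTranslate g f) = lpTranslate g (μ f) := by
  choose m hm using h
  obtain ⟨y, t, hyt, hy⟩ := MulAction.exists_orbit_section G S
  have hbound : ∀ s f, |cosetMean (m (y s)) (t s) f| ≤ ‖f‖ := fun s f =>
    (abs_apply_le_norm_of_pos_of_map_one (hm _).1 (hm _).2.1 _).trans (norm_lpComap_le _ f)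
  refine ⟨lpInftyOfBoundedFamily _ hbound, norm_lpInftyOfBoundedFamily_le _ hbound,
    lp.ext (funext fun s => (hm (y s)).1), fun g f => lp.ext (funext fun s => ?_)⟩
  change cosetMean (m (y s)) (t s) (lpTranslate g f) =
    cosetMean (m (y (g⁻¹ • s))) (t (g⁻¹ • s)) f
  rw [cosetMean_lpTranslate, hy]
  refine LinearMap.congr_fun (cosetMean_eq_of_smul_eq (hm _).2.2 ?_) f
  rw [mul_smul, hyt, ← hy g⁻¹, hyt]
end

section
/- Let G be a group, S a G-set, and suppose there exists a G-equivariant contracting linear map μ⁰ : ℓ∞(G) → ℓ∞(S) with μ⁰(1_G) = 1_S. Then for every n ≥ 1 there exists a G-equivariant contracting linear map μⁿ : ℓ∞(G^{n+1}) → ℓ∞(S^{n+1}) such that the family (μⁿ) commutes with the homogeneous coboundary operators δⁿ(f)(x₀,…,x_{n+1}) = Σᵢ (−1)ⁱ f(x₀,…,x̂ᵢ,…,x_{n+1}). -/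
open scoped ENNReal

set_option maxHeartbeats 2000000

/-- The homogeneous coboundary operator
`δⁿ(f)(x₀,…,x_{n+1}) = Σᵢ (−1)ⁱ f(x₀,…,x̂ᵢ,…,x_{n+1})` on `ℓ∞(X^{•+1})`. -/
noncomputable def lpCoboundary {X : Type*} (n : ℕ)
    (f : lp (fun _ : (Fin (n + 1) → X) => ℝ) ∞) : lp (fun _ : (Fin (n + 2) → X) => ℝ) ∞ :=
  ⟨fun x => ∑ i : Fin (n + 2), (-1 : ℝ) ^ (i : ℕ) * f (x ∘ i.succAbove), by
    refine memℓp_infty ⟨(n + 2) * ‖f‖, ?_⟩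
    rintro _ ⟨x, rfl⟩
    calc ‖∑ i : Fin (n + 2), (-1 : ℝ) ^ (i : ℕ) * f (x ∘ i.succAbove)‖
        ≤ ∑ i : Fin (n + 2), ‖(-1 : ℝ) ^ (i : ℕ) * f (x ∘ i.succAbove)‖ :=
          norm_sum_le _ _
      _ ≤ ∑ _i : Fin (n + 2), ‖f‖ := by
          refine Finset.sum_le_sum fun i _ => ?_
          rw [norm_mul, norm_pow, norm_neg, norm_one, one_pow, one_mul]
          exact lp.norm_apply_le_norm ENNReal.top_ne_zero f _
      _ = (n + 2) * ‖f‖ := by rw [Finset.sum_const, Finset.card_univ, Fintype.card_fin, nsmul_eq_mul]; push_cast; ring⟩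

namespace ECMaux

section basic

variable {X : Type*}

/-- Build an element of `ℓ∞(X)` from a bounded function. -/
noncomputable def mk (f : X → ℝ) (C : ℝ) (h : ∀ x, ‖f x‖ ≤ C) : lp (fun _ : X => ℝ) ∞ :=
  ⟨f, memℓp_infty ⟨C, by rintro _ ⟨x, rfl⟩; exact h x⟩⟩

@[simp] lemma mk_apply (f : X → ℝ) (C : ℝ) (h : ∀ x, ‖f x‖ ≤ C) (x : X) :
    mk f C h x = f x := rfl

lemma norm_mk_le (f : X → ℝ) (C : ℝ) (h : ∀ x, ‖f x‖ ≤ C) (hC : 0 ≤ C) :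
    ‖mk f C h‖ ≤ C :=
  lp.norm_le_of_forall_le hC h

lemma apply_le_norm (f : lp (fun _ : X => ℝ) ∞) (x : X) : ‖f x‖ ≤ ‖f‖ :=
  lp.norm_apply_le_norm ENNReal.top_ne_zero f x

@[simp] lemma lpConst_apply (c : ℝ) (x : X) : lpConst X c x = c := rfl

lemma lpConst_eq_smul (c : ℝ) : lpConst X c = c • lpConst X 1 := by
  apply lp.ext
  funext x
  simp only [lpConst_apply, lp.coeFn_smul, Pi.smul_apply, smul_eq_mul, mul_one]

@[simp] lemma add_apply (a b : lp (fun _ : X => ℝ) ∞) (x : X) : (a + b) x = a x + b x := by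
  rw [lp.coeFn_add]; rfl

@[simp] lemma smul_apply (c : ℝ) (a : lp (fun _ : X => ℝ) ∞) (x : X) : (c • a) x = c * a x := by
  rw [lp.coeFn_smul]; rfl

/-- Pullback along the `j`-th face map. -/
noncomputable def face {n : ℕ} (j : Fin (n + 2))
    (h : lp (fun _ : (Fin (n + 1) → X) => ℝ) ∞) : lp (fun _ : (Fin (n + 2) → X) => ℝ) ∞ :=
  mk (fun x => h (x ∘ j.succAbove)) ‖h‖ (fun _ => apply_le_norm h _)

@[simp] lemma face_apply {n : ℕ} (j : Fin (n + 2))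
    (h : lp (fun _ : (Fin (n + 1) → X) => ℝ) ∞) (x : Fin (n + 2) → X) :
    face j h x = h (x ∘ j.succAbove) := rfl

lemma cons_comp_succAbove {n : ℕ} (a : X) (y : Fin (n + 1) → X) (k : Fin (n + 1)) :
    (Fin.cons a y : Fin (n + 2) → X) ∘ (k.succ).succAbove = Fin.cons a (y ∘ k.succAbove) := by
  funext i
  refine Fin.cases ?_ (fun i => ?_) i
  · simp
  · simp

/-- The coboundary is the alternating sum of face pullbacks. -/
lemma lpCoboundary_eq_sum {n : ℕ} (f : lp (fun _ : (Fin (n + 1) → X) => ℝ) ∞) :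
    lpCoboundary n f = ∑ i : Fin (n + 2), ((-1 : ℝ) ^ (i : ℕ)) • face i f := by
  apply lp.ext
  funext x
  have h1 : (⇑(∑ i : Fin (n + 2), ((-1 : ℝ) ^ (i : ℕ)) • face i f))
      = ∑ i : Fin (n + 2), ⇑(((-1 : ℝ) ^ (i : ℕ)) • face i f) :=
    lp.coeFn_sum _ _
  have h2 : (lpCoboundary n f) x
      = ∑ i : Fin (n + 2), (-1 : ℝ) ^ (i : ℕ) * f (x ∘ i.succAbove) := rfl
  rw [h2, congrFun h1 x, Finset.sum_apply]
  refine Finset.sum_congr rfl fun i _ => ?_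
  rw [lp.coeFn_smul, Pi.smul_apply, smul_eq_mul, face_apply]

end basic

section main

variable {G S : Type*} [Group G] [MulAction G S]

@[simp] lemma lpTranslate_apply {α : Type*} [MulAction G α] (g : G)
    (f : lp (fun _ : α => ℝ) ∞) (x : α) : lpTranslate g f x = f (g⁻¹ • x) := rfl

/-- Freeze all coordinates but the zeroth. -/
noncomputable def inn {n : ℕ} (f : lp (fun _ : (Fin (n + 2) → G) => ℝ) ∞)
    (y : Fin (n + 1) → G) : lp (fun _ : (Fin 1 → G) => ℝ) ∞ :=
  mk (fun g0 => f (Fin.cons (g0 0) y)) ‖f‖ (fun _ => apply_le_norm f _)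

lemma norm_inn_le {n : ℕ} (f : lp (fun _ : (Fin (n + 2) → G) => ℝ) ∞)
    (y : Fin (n + 1) → G) : ‖inn f y‖ ≤ ‖f‖ :=
  norm_mk_le _ _ _ (norm_nonneg f)

variable (μ0 : lp (fun _ : (Fin 1 → G) => ℝ) ∞ →L[ℝ] lp (fun _ : (Fin 1 → S) => ℝ) ∞)

/-- Apply `μ0` in the zeroth coordinate, evaluated there at `s`. -/
noncomputable def big {n : ℕ} (f : lp (fun _ : (Fin (n + 2) → G) => ℝ) ∞) (s : S) :
    lp (fun _ : (Fin (n + 1) → G) => ℝ) ∞ :=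
  mk (fun y => μ0 (inn f y) (fun _ => s)) (‖μ0‖ * ‖f‖) (fun y =>
    (apply_le_norm _ _).trans ((μ0.le_opNorm _).trans
      (mul_le_mul_of_nonneg_left (norm_inn_le f y) (norm_nonneg _))))

@[simp] lemma big_apply {n : ℕ} (f : lp (fun _ : (Fin (n + 2) → G) => ℝ) ∞) (s : S)
    (y : Fin (n + 1) → G) : big μ0 f s y = μ0 (inn f y) (fun _ => s) := rfl

lemma inn_add {n : ℕ} (f f' : lp (fun _ : (Fin (n + 2) → G) => ℝ) ∞)
    (y : Fin (n + 1) → G) : inn (f + f') y = inn f y + inn f' y := by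
  apply lp.ext; funext g0
  simp only [inn, mk_apply, add_apply]

lemma inn_smul {n : ℕ} (c : ℝ) (f : lp (fun _ : (Fin (n + 2) → G) => ℝ) ∞)
    (y : Fin (n + 1) → G) : inn (c • f) y = c • inn f y := by
  apply lp.ext; funext g0
  simp only [inn, mk_apply, smul_apply]

lemma big_add {n : ℕ} (f f' : lp (fun _ : (Fin (n + 2) → G) => ℝ) ∞) (s : S) :
    big μ0 (f + f') s = big μ0 f s + big μ0 f' s := by
  apply lp.ext; funext y
  simp only [big, mk_apply, inn_add, map_add, add_apply]

lemma big_smul {n : ℕ} (c : ℝ) (f : lp (fun _ : (Fin (n + 2) → G) => ℝ) ∞) (s : S) :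
    big μ0 (c • f) s = c • big μ0 f s := by
  apply lp.ext; funext y
  simp only [big, mk_apply, inn_smul, map_smul, smul_apply]

lemma step_bound {n : ℕ}
    (T : lp (fun _ : (Fin (n + 1) → G) => ℝ) ∞ →L[ℝ] lp (fun _ : (Fin (n + 1) → S) => ℝ) ∞)
    (f : lp (fun _ : (Fin (n + 2) → G) => ℝ) ∞) (x : Fin (n + 2) → S) :
    ‖T (big μ0 f (x 0)) (Fin.tail x)‖ ≤ ‖T‖ * (‖μ0‖ * ‖f‖) :=
  (apply_le_norm _ _).trans ((T.le_opNorm _).trans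
    (mul_le_mul_of_nonneg_left (norm_mk_le _ _ _
      (mul_nonneg (norm_nonneg _) (norm_nonneg _))) (norm_nonneg _)))

/-- The inductive step: extend a cochain map one degree up by applying `μ0` in the
zeroth coordinate. -/
noncomputable def step {n : ℕ}
    (T : lp (fun _ : (Fin (n + 1) → G) => ℝ) ∞ →L[ℝ] lp (fun _ : (Fin (n + 1) → S) => ℝ) ∞) :
    lp (fun _ : (Fin (n + 2) → G) => ℝ) ∞ →L[ℝ] lp (fun _ : (Fin (n + 2) → S) => ℝ) ∞ :=
  LinearMap.mkContinuous
    { toFun := fun f => mk (fun x => T (big μ0 f (x 0)) (Fin.tail x)) (‖T‖ * (‖μ0‖ * ‖f‖))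
        (step_bound μ0 T f)
      map_add' := fun f f' => by
        apply lp.ext; funext x
        simp only [mk_apply, big_add, map_add, add_apply]
      map_smul' := fun c f => by
        apply lp.ext; funext x
        simp only [mk_apply, big_smul, map_smul, RingHom.id_apply, smul_apply] }
    (‖T‖ * ‖μ0‖)
    (fun f => by
      rw [mul_assoc]
      exact norm_mk_le _ _ (step_bound μ0 T f) (by positivity))

lemma step_eq {n : ℕ}
    (T : lp (fun _ : (Fin (n + 1) → G) => ℝ) ∞ →L[ℝ] lp (fun _ : (Fin (n + 1) → S) => ℝ) ∞)
    (f : lp (fun _ : (Fin (n + 2) → G) => ℝ) ∞) :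
    step μ0 T f = mk (fun x => T (big μ0 f (x 0)) (Fin.tail x)) (‖T‖ * (‖μ0‖ * ‖f‖))
      (step_bound μ0 T f) := rfl

lemma step_apply {n : ℕ}
    (T : lp (fun _ : (Fin (n + 1) → G) => ℝ) ∞ →L[ℝ] lp (fun _ : (Fin (n + 1) → S) => ℝ) ∞)
    (f : lp (fun _ : (Fin (n + 2) → G) => ℝ) ∞) (x : Fin (n + 2) → S) :
    step μ0 T f x = T (big μ0 f (x 0)) (Fin.tail x) := by
  rw [step_eq]; rfl

lemma step_norm_le {n : ℕ}
    (T : lp (fun _ : (Fin (n + 1) → G) => ℝ) ∞ →L[ℝ] lp (fun _ : (Fin (n + 1) → S) => ℝ) ∞)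
    (hμ0 : ‖μ0‖ ≤ 1) (hT : ‖T‖ ≤ 1) : ‖step μ0 T‖ ≤ 1 := by
  refine ContinuousLinearMap.opNorm_le_bound _ zero_le_one fun f => ?_
  rw [step_eq, one_mul]
  refine (norm_mk_le _ _ (step_bound μ0 T f) (by positivity)).trans ?_
  have h0 : (0:ℝ) ≤ ‖f‖ := norm_nonneg f
  have h2 : (0:ℝ) ≤ ‖μ0‖ * ‖f‖ := mul_nonneg (norm_nonneg _) h0
  calc ‖T‖ * (‖μ0‖ * ‖f‖) ≤ 1 * (1 * ‖f‖) :=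
        mul_le_mul hT (by nlinarith [mul_le_mul_of_nonneg_right hμ0 h0]) h2 zero_le_one
    _ = ‖f‖ := by ring

lemma μ0_const (hone : μ0 (lpConst (Fin 1 → G) 1) = lpConst (Fin 1 → S) 1) (c : ℝ) :
    μ0 (lpConst (Fin 1 → G) c) = lpConst (Fin 1 → S) c := by
  rw [lpConst_eq_smul, map_smul, hone, ← lpConst_eq_smul]

/-! ### Equivariance -/

lemma inn_translate {n : ℕ} (g : G) (f : lp (fun _ : (Fin (n + 2) → G) => ℝ) ∞)
    (y : Fin (n + 1) → G) :
    inn (lpTranslate g f) y = lpTranslate g (inn f (g⁻¹ • y)) := by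
  apply lp.ext; funext g0
  simp only [inn, mk_apply, lpTranslate_apply]
  have hc : g⁻¹ • Fin.cons (α := fun _ : Fin (n + 2) => G) (g0 0) y
      = Fin.cons (α := fun _ : Fin (n + 2) => G) ((g⁻¹ • g0) 0) (g⁻¹ • y) := by
    funext i
    refine Fin.cases ?_ (fun i => ?_) i
    · simp
    · simp
  rw [hc]

lemma big_translate (hequi : ∀ (g : G) (f), μ0 (lpTranslate g f) = lpTranslate g (μ0 f))
    {n : ℕ} (g : G) (f : lp (fun _ : (Fin (n + 2) → G) => ℝ) ∞) (s : S) :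
    big μ0 (lpTranslate g f) s = lpTranslate g (big μ0 f (g⁻¹ • s)) := by
  apply lp.ext; funext y
  simp only [big, mk_apply, lpTranslate_apply]
  rw [inn_translate, hequi, lpTranslate_apply]
  rfl

lemma step_translate (hequi : ∀ (g : G) (f), μ0 (lpTranslate g f) = lpTranslate g (μ0 f))
    {n : ℕ}
    (T : lp (fun _ : (Fin (n + 1) → G) => ℝ) ∞ →L[ℝ] lp (fun _ : (Fin (n + 1) → S) => ℝ) ∞)
    (hT : ∀ (g : G) (f), T (lpTranslate g f) = lpTranslate g (T f))
    (g : G) (f : lp (fun _ : (Fin (n + 2) → G) => ℝ) ∞) :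
    step μ0 T (lpTranslate g f) = lpTranslate g (step μ0 T f) := by
  apply lp.ext; funext x
  rw [lpTranslate_apply, step_apply, step_apply, big_translate μ0 hequi, hT,
    lpTranslate_apply]
  rfl

/-! ### Commutation with faces -/

lemma inn_face_zero {n : ℕ} (h : lp (fun _ : (Fin (n + 1) → G) => ℝ) ∞)
    (y : Fin (n + 1) → G) : inn (face 0 h) y = lpConst (Fin 1 → G) (h y) := by
  apply lp.ext; funext g0
  simp only [inn, mk_apply, face_apply, lpConst_apply]
  have hc : (Fin.cons (g0 0) y : Fin (n + 2) → G) ∘ (0 : Fin (n + 2)).succAbove = y := by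
    funext i
    simp [Fin.zero_succAbove]
  rw [hc]

lemma big_face_zero (hone : μ0 (lpConst (Fin 1 → G) 1) = lpConst (Fin 1 → S) 1)
    {n : ℕ} (h : lp (fun _ : (Fin (n + 1) → G) => ℝ) ∞) (s : S) :
    big μ0 (face 0 h) s = h := by
  apply lp.ext; funext y
  simp only [big, mk_apply]
  rw [inn_face_zero, μ0_const μ0 hone, lpConst_apply]

lemma step_face_zero (hone : μ0 (lpConst (Fin 1 → G) 1) = lpConst (Fin 1 → S) 1)
    {n : ℕ}
    (T : lp (fun _ : (Fin (n + 1) → G) => ℝ) ∞ →L[ℝ] lp (fun _ : (Fin (n + 1) → S) => ℝ) ∞)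
    (h : lp (fun _ : (Fin (n + 1) → G) => ℝ) ∞) :
    step μ0 T (face 0 h) = face 0 (T h) := by
  apply lp.ext; funext x
  rw [step_apply, big_face_zero μ0 hone, face_apply]
  have hc : x ∘ (0 : Fin (n + 2)).succAbove = Fin.tail x := by
    funext i
    simp [Fin.zero_succAbove, Fin.tail]
  rw [hc]

lemma inn_face_succ {n : ℕ} (k : Fin (n + 2)) (h : lp (fun _ : (Fin (n + 2) → G) => ℝ) ∞)
    (y : Fin (n + 2) → G) :
    inn (face k.succ h) y = inn h (y ∘ k.succAbove) := by
  apply lp.ext; funext g0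
  simp only [inn, mk_apply, face_apply]
  rw [cons_comp_succAbove]

lemma big_face_succ {n : ℕ} (k : Fin (n + 2)) (h : lp (fun _ : (Fin (n + 2) → G) => ℝ) ∞)
    (s : S) : big μ0 (face k.succ h) s = face k (big μ0 h s) := by
  apply lp.ext; funext y
  simp only [big, mk_apply, face_apply]
  rw [inn_face_succ]

/-- The family of cochain maps. -/
noncomputable def muFam : ∀ n : ℕ,
    lp (fun _ : (Fin (n + 1) → G) => ℝ) ∞ →L[ℝ] lp (fun _ : (Fin (n + 1) → S) => ℝ) ∞ :=
  fun n => Nat.rec μ0 (fun _ T => step μ0 T) n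

lemma muFam_zero : muFam μ0 0 = μ0 := rfl

lemma muFam_succ (n : ℕ) : muFam μ0 (n + 1) = step μ0 (muFam μ0 n) := rfl

lemma muFam_face (hone : μ0 (lpConst (Fin 1 → G) 1) = lpConst (Fin 1 → S) 1) :
    ∀ (n : ℕ) (j : Fin (n + 2)) (h : lp (fun _ : (Fin (n + 1) → G) => ℝ) ∞),
      muFam μ0 (n + 1) (face j h) = face j (muFam μ0 n h) := by
  intro n
  induction n with
  | zero =>
    intro j h
    refine Fin.cases ?_ (fun k => ?_) j
    · exact step_face_zero μ0 hone μ0 h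
    · have hk : k = 0 := Subsingleton.elim _ _
      subst hk
      apply lp.ext; funext x
      rw [muFam_succ μ0 0, muFam_zero, step_apply, face_apply]
      have hinn : ∀ y : Fin 1 → G, inn (face (0 : Fin 1).succ h) y = h := by
        intro y
        apply lp.ext; funext g0
        simp only [inn, mk_apply, face_apply]
        have hc : (Fin.cons (g0 0) y : Fin 2 → G) ∘ ((0 : Fin 1).succ).succAbove = g0 := by
          funext i
          have hi : i = 0 := Subsingleton.elim _ _
          subst hi
          simp
        rw [hc]
      have hbig : big μ0 (face (0 : Fin 1).succ h) (x 0)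
          = lpConst (Fin 1 → G) (μ0 h (fun _ => x 0)) := by
        apply lp.ext; funext y
        simp only [big, mk_apply, lpConst_apply]
        rw [hinn]
      rw [hbig, μ0_const μ0 hone, lpConst_apply]
      have hc : x ∘ ((0 : Fin 1).succ).succAbove = fun _ : Fin 1 => x 0 := by
        funext i
        have hi : i = 0 := Subsingleton.elim _ _
        subst hi
        simp
      rw [hc]
  | succ n ih =>
    intro j h
    refine Fin.cases ?_ (fun k => ?_) j
    · exact step_face_zero μ0 hone (muFam μ0 (n + 1)) h
    · apply lp.ext; funext x
      have h0 : (x ∘ (k.succ).succAbove) 0 = x 0 := by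
        show x ((k.succ).succAbove 0) = x 0
        rw [Fin.succ_succAbove_zero]
      have ht : Fin.tail (x ∘ (k.succ).succAbove) = Fin.tail x ∘ k.succAbove := by
        funext i
        show x ((k.succ).succAbove i.succ) = x ((k.succAbove i).succ)
        rw [Fin.succ_succAbove_succ]
      conv_lhs => rw [muFam_succ μ0 (n + 1)]
      rw [step_apply, big_face_succ, ih k, face_apply, face_apply, muFam_succ μ0 n,
        step_apply, h0, ht]

end main

end ECMaux

/-- Inductive step of Proposition 2.1: a `G`-equivariant contracting map
`μ⁰ : ℓ∞(G) → ℓ∞(S)` with `μ⁰(1) = 1` extends to a family of `G`-equivariant contracting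
maps `μⁿ : ℓ∞(G^{n+1}) → ℓ∞(S^{n+1})` commuting with the homogeneous coboundary
operators. -/
theorem exists_equivariant_cochain_maps {G S : Type*} [Group G] [MulAction G S]
    (μ0 : lp (fun _ : (Fin 1 → G) => ℝ) ∞ →L[ℝ] lp (fun _ : (Fin 1 → S) => ℝ) ∞)
    (hnorm : ‖μ0‖ ≤ 1) (hone : μ0 (lpConst (Fin 1 → G) 1) = lpConst (Fin 1 → S) 1)
    (hequi : ∀ (g : G) (f), μ0 (lpTranslate g f) = lpTranslate g (μ0 f)) :
    ∃ μ : ∀ n : ℕ,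
        lp (fun _ : (Fin (n + 1) → G) => ℝ) ∞ →L[ℝ] lp (fun _ : (Fin (n + 1) → S) => ℝ) ∞,
      μ 0 = μ0 ∧ (∀ n, ‖μ n‖ ≤ 1) ∧
      (∀ (n : ℕ) (g : G) (f), μ n (lpTranslate g f) = lpTranslate g (μ n f)) ∧
      ∀ (n : ℕ) (f), μ (n + 1) (lpCoboundary n f) = lpCoboundary n (μ n f) := by
  refine ⟨ECMaux.muFam μ0, rfl, ?_, ?_, ?_⟩
  · intro n
    induction n with
    | zero => exact hnorm
    | succ n ih => exact ECMaux.step_norm_le μ0 _ hnorm ih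
  · intro n
    induction n with
    | zero => exact hequi
    | succ n ih => exact fun g f => ECMaux.step_translate μ0 hequi _ ih g f
  · intro n f
    rw [ECMaux.lpCoboundary_eq_sum, ECMaux.lpCoboundary_eq_sum, map_sum]
    refine Finset.sum_congr rfl fun i _ => ?_
    rw [map_smul, ECMaux.muFam_face μ0 hone n i f]
end
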